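/- arXiv:1511.02285 — 10 statements merged into one kernel-verified Lean document; each statement's English description precedes it below -/
import Mathlib

section
/- Let M ≥ 2 be an integer, let P, f, Δ, R > 0 be real numbers, and set c = ((M−1)/2)·Δ + ((M+1)/2)·R. For T > 0 define x(T) = M(M−1)·[ln(T·P/c) + ln((1+fP)^{1/(M−1)} − 1)] / ln(1+fP) and the spectral-efficiency-loss upper bound L(T) = (x(T)/T)·(c/M) + ln(1 + P·(1+fP)^{−x(T)/(M(M−1))}). Then lim_{T→∞} T·L(T)/ln T = c·(M−1)/ln(1+fP); equivalently, L(T) = (((M−1)/(2M))Δ + ((M+1)/(2M))R) · (M(M−1)/ln(1+fP)) · (ln T)/T + o((ln T)/T) as T → ∞. (Theorem 5: spectral efficiency loss of sequential beamforming with closed-loop training relative to the genie-aided system.) -/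
open Real Filter

/-- Theorem 5 of the paper: the spectral efficiency loss of sequential beamforming with
closed-loop training, at the approximately optimal training duration, satisfies
`L(T) = c*(M-1)/ln(1+fP) * (ln T)/T + o((ln T)/T)`, i.e.
`T * L(T) / ln T → c*(M-1)/ln(1+fP)` as `T → ∞`. -/
theorem SE_loss_seqbf_closed
    (M : ℕ) (hM : 2 ≤ M) (P f Δ R : ℝ)
    (hP : 0 < P) (hf : 0 < f) (hΔ : 0 < Δ) (hR : 0 < R)
    (c : ℝ) (hc : c = ((M : ℝ) - 1) / 2 * Δ + ((M : ℝ) + 1) / 2 * R)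
    (x : ℝ → ℝ)
    (hxdef : ∀ T : ℝ, x T = (M : ℝ) * ((M : ℝ) - 1) *
        (Real.log (T * P / c) +
          Real.log ((1 + f * P) ^ ((1 : ℝ) / ((M : ℝ) - 1)) - 1)) /
        Real.log (1 + f * P))
    (L : ℝ → ℝ)
    (hLdef : ∀ T : ℝ, L T = (x T / T) * (c / (M : ℝ)) +
        Real.log (1 + P * (1 + f * P) ^ (-(x T / ((M : ℝ) * ((M : ℝ) - 1)))))) :
    Tendsto (fun T : ℝ => T * L T / Real.log T) atTop
      (nhds (c * ((M : ℝ) - 1) / Real.log (1 + f * P))) := by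
  have hM1 : (1:ℝ) < (M:ℝ) := by exact_mod_cast (by omega : 1 < M)
  have hM0 : (0:ℝ) < (M:ℝ) := by linarith
  have hMm1 : (0:ℝ) < (M:ℝ) - 1 := by linarith
  have h1fP : 1 < 1 + f * P := by nlinarith
  set b := Real.log (1 + f * P) with hbdef
  have hb : 0 < b := Real.log_pos h1fP
  have hc0 : 0 < c := by
    rw [hc]; nlinarith
  set s := (1 + f * P) ^ ((1:ℝ) / ((M:ℝ) - 1)) - 1 with hsdef
  have hs : 0 < s := by
    have h1 : 1 < (1 + f * P) ^ ((1:ℝ) / ((M:ℝ) - 1)) :=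
      (Real.one_lt_rpow_iff_of_pos (by linarith)).mpr
        (Or.inl ⟨h1fP, by positivity⟩)
    simp only [hsdef]; linarith
  set K := Real.log (P / c) + Real.log s with hKdef
  set A := ((M:ℝ) - 1) * c / b with hAdef
  have key : ∀ T : ℝ, 2 ≤ T →
      T * L T / Real.log T =
        A + A * K / Real.log T + (T * Real.log (1 + c / (T * s))) / Real.log T := by
    intro T hT
    have hT0 : (0:ℝ) < T := by linarith
    have hlogT : 0 < Real.log T := Real.log_pos (by linarith)
    have hxm : x T / ((M:ℝ) * ((M:ℝ) - 1)) = (Real.log T + K) / b := by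
      rw [hxdef]
      have hlogsplit : Real.log (T * P / c) = Real.log T + Real.log (P / c) := by
        rw [mul_div_assoc, Real.log_mul (ne_of_gt hT0) (by positivity)]
      rw [hlogsplit, hKdef]
      field_simp
      ring
    have hx' : x T = (M:ℝ) * ((M:ℝ) - 1) * ((Real.log T + K) / b) := by
      have := hxm
      field_simp at this ⊢
      linarith
    have hrpow : P * (1 + f * P) ^ (-(x T / ((M:ℝ) * ((M:ℝ) - 1)))) = c / (T * s) := by
      rw [hxm, Real.rpow_def_of_pos (by linarith : (0:ℝ) < 1 + f * P)]
      rw [show Real.log (1 + f * P) * -((Real.log T + K) / b)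
            = -(Real.log T + (Real.log (P / c) + Real.log s)) by
          rw [← hbdef, hKdef]; field_simp]
      rw [Real.exp_neg, Real.exp_add, Real.exp_add, Real.exp_log hT0,
        Real.exp_log (by positivity : (0:ℝ) < P / c), Real.exp_log hs]
      field_simp
    have hLT : T * L T = A * Real.log T + A * K + T * Real.log (1 + c / (T * s)) := by
      rw [hLdef, hrpow, hx', hAdef]
      field_simp
    rw [hLT, add_div, add_div, mul_div_cancel_right₀ A hlogT.ne']
  have h1 : Tendsto (fun T : ℝ => A * K / Real.log T) atTop (nhds 0) := by
    have h := Real.tendsto_log_atTop.inv_tendsto_atTop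
    have := h.const_mul (A * K)
    simpa [div_eq_mul_inv] using this
  have h2 : Tendsto (fun T : ℝ => (T * Real.log (1 + c / (T * s))) / Real.log T)
      atTop (nhds 0) := by
    apply squeeze_zero' (g := fun T : ℝ => (c / s) / Real.log T)
    · filter_upwards [eventually_ge_atTop (2:ℝ)] with T hT
      have hT0 : (0:ℝ) < T := by linarith
      have hlogT : 0 < Real.log T := Real.log_pos (by linarith)
      have hlog : 0 ≤ Real.log (1 + c / (T * s)) := by
        apply Real.log_nonneg
        have : 0 ≤ c / (T * s) := by positivity
        linarith
      positivity
    · filter_upwards [eventually_ge_atTop (2:ℝ)] with T hT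
      have hT0 : (0:ℝ) < T := by linarith
      have hlogT : 0 < Real.log T := Real.log_pos (by linarith)
      have hlog : Real.log (1 + c / (T * s)) ≤ c / (T * s) := by
        have h := Real.log_le_sub_one_of_pos (show (0:ℝ) < 1 + c / (T * s) by positivity)
        linarith
      have hmul : T * Real.log (1 + c / (T * s)) ≤ c / s := by
        calc T * Real.log (1 + c / (T * s)) ≤ T * (c / (T * s)) :=
              mul_le_mul_of_nonneg_left hlog hT0.le
          _ = c / s := by field_simp
      exact div_le_div_of_nonneg_right hmul hlogT.le
    · have h := Real.tendsto_log_atTop.inv_tendsto_atTop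
      have := h.const_mul (c / s)
      simpa [div_eq_mul_inv] using this
  have hmain : Tendsto
      (fun T : ℝ => A + A * K / Real.log T + (T * Real.log (1 + c / (T * s))) / Real.log T)
      atTop (nhds (c * ((M:ℝ) - 1) / b)) := by
    have := ((tendsto_const_nhds (x := A) (f := atTop)).add h1).add h2
    simpa [hAdef, mul_comm] using this
  exact hmain.congr' (by filter_upwards [eventually_ge_atTop (2:ℝ)] with T hT using (key T hT).symm)
end

section
/- Let M ≥ 2 be an integer and let P, f, T, Δ, R > 0 be real numbers. Set c' = ((M−1)Δ + (M+1)R)/(2M) and x = sqrt((M−1)·T/(f·c')). Then (x/T)·c' + ln(1 + ((M−1)·P/M) / (1 + f·x·P/M)) ≤ 2·sqrt((M−1)·c'/(f·T)). (Theorem 6: the spectral efficiency loss of sequential beamforming with open-loop training, evaluated at the approximately optimal training duration, is at most 2·sqrt((M−1)·[((M−1)/(2M))Δ + ((M+1)/(2M))R]/(f·T)).) -/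
open Real

/-! The training-length term `(c'/T)·x` and the bound `((M-1)/f)/x` on the interference
penalty (from `log (1 + y) ≤ y`) are the two terms of `A x + B / x`, and the chosen
`x = √(B/A)` is exactly the AM-GM point where both terms equal `√(AB)`. -/

theorem Real.log_one_add_div_one_add_le {a b : ℝ} (ha : 0 ≤ a) (hb : 0 < b) :
    log (1 + a / (1 + b)) ≤ a / b :=
  calc log (1 + a / (1 + b)) ≤ a / (1 + b) := by
        linarith [log_le_sub_one_of_pos (show 0 < 1 + a / (1 + b) by positivity)]
    _ ≤ a / b := div_le_div_of_nonneg_left ha hb (by linarith)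

theorem Real.mul_sqrt_div_add_div_sqrt_div {A B : ℝ} (hA : 0 ≤ A) (hB : 0 ≤ B) :
    A * √(B / A) + B / √(B / A) = 2 * √(A * B) := by
  rcases hA.eq_or_lt with rfl | hA
  · simp
  rcases hB.eq_or_lt with rfl | hB
  · simp
  have hs : 0 < √(B / A) := sqrt_pos.mpr (div_pos hB hA)
  have hsq : √(B / A) ^ 2 = B / A := sq_sqrt (div_pos hB hA).le
  have hAB : √(A * B) = A * √(B / A) := by
    rw [← sqrt_sq hA.le, ← sqrt_mul (sq_nonneg A), sqrt_sq hA.le]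
    congr 1
    field_simp
  rw [hAB]
  field_simp
  rw [hsq]
  field_simp
  ring

/-- Theorem 6 of the paper: the spectral efficiency loss of sequential beamforming with
open-loop training, evaluated at the approximately optimal training duration, is at most
`2 * sqrt((M-1) * c' / (f*T))` with `c' = ((M-1)Δ + (M+1)R)/(2M)`. -/
theorem SE_loss_seqbf_open
    (M : ℕ) (hM : 2 ≤ M) (P f T Δ R : ℝ)
    (hP : 0 < P) (hf : 0 < f) (hT : 0 < T) (hΔ : 0 < Δ) (hR : 0 < R)
    (c' : ℝ) (hc' : c' = (((M : ℝ) - 1) * Δ + ((M : ℝ) + 1) * R) / (2 * (M : ℝ)))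
    (x : ℝ) (hx : x = Real.sqrt (((M : ℝ) - 1) * T / (f * c'))) :
    (x / T) * c' +
      Real.log (1 + (((M : ℝ) - 1) * P / (M : ℝ)) / (1 + f * x * P / (M : ℝ)))
      ≤ 2 * Real.sqrt (((M : ℝ) - 1) * c' / (f * T)) := by
  have hM' : (2 : ℝ) ≤ M := by exact_mod_cast hM
  have hm : 0 < (M : ℝ) - 1 := by linarith
  have hc'pos : 0 < c' := by
    rw [hc']
    exact div_pos (by nlinarith) (by linarith)
  have hxpos : 0 < x := hx ▸ sqrt_pos.mpr (by positivity)
  have hlog : log (1 + ((M - 1) * P / M) / (1 + f * x * P / M)) ≤ ((M - 1) / f) / x :=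
    calc _ ≤ ((M - 1) * P / M) / (f * x * P / M) :=
          log_one_add_div_one_add_le (by positivity) (by positivity)
      _ = ((M - 1) / f) / x := by field_simp
  calc _ ≤ c' / T * x + ((M - 1) / f) / x := by
        rw [div_mul_comm]
        linarith
    _ = 2 * √(c' / T * ((M - 1) / f)) := by
        rw [hx, ← mul_sqrt_div_add_div_sqrt_div (by positivity) (by positivity)]
        congr 3 <;> field_simp
    _ = _ := by
        congr 2
        field_simp
end

section
/- Let M ≥ 2 be an integer and let P, f, R > 0 be real numbers, and set c = M·R. For T > 0 define x(T) = M(M−1)·[ln(T·P/c) + ln((1+fP)^{1/(M−1)} − 1)] / ln(1+fP) and L(T) = (x(T)/T)·R + ln(1 + P·(1+fP)^{−x(T)/(M(M−1))}). Then lim_{T→∞} T·L(T)/ln T = R·M(M−1)/ln(1+fP); equivalently, L(T) = R·(M(M−1)/ln(1+fP))·(ln T)/T + o((ln T)/T) as T → ∞. (Theorem 7: spectral efficiency loss of the half-duplex strategy with closed-loop training relative to the genie-aided system.) -/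
/-!
The training length `x(T)` is affine in `ln T` with slope `M(M-1)/ln(1+fP)`, so the training
overhead `R · x(T)` divided by `ln T` tends to `R M(M-1)/ln(1+fP)`. The choice
of `x(T)` makes the residual interference exactly `ln (1 + c/(D T))` with
`D = (1+fP)^{1/(M-1)} - 1 > 0`; hence `T` times it stays bounded (it tends to `c/D`) and
vanishes after division by `ln T`.
-/

open Real Filter Topology

lemma Real.rpow_neg_log_div_log {b u : ℝ} (hb₀ : 0 < b) (hb₁ : b ≠ 1) (hu : 0 < u) :
    b ^ (-(log u / log b)) = u⁻¹ := by
  rw [log_div_log, rpow_neg hb₀.le, rpow_logb hb₀ hb₁ hu]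

lemma tendsto_affine_log_div_log (α β : ℝ) :
    Tendsto (fun T : ℝ => (α * log T + β) / log T) atTop (𝓝 α) := by
  have h : Tendsto (fun T : ℝ => α + β * (log T)⁻¹) atTop (𝓝 (α + β * 0)) :=
    tendsto_const_nhds.add (tendsto_log_atTop.inv_tendsto_atTop.const_mul β)
  rw [mul_zero, add_zero] at h
  refine h.congr' ?_
  filter_upwards [eventually_gt_atTop 1] with T hT
  field_simp [(log_pos hT).ne']

lemma tendsto_mul_log_one_add_div_div_log (k : ℝ) :
    Tendsto (fun T : ℝ => T * log (1 + k / T) / log T) atTop (𝓝 0) := by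
  have h := (tendsto_mul_log_one_add_div_atTop k).mul tendsto_log_atTop.inv_tendsto_atTop
  rw [mul_zero] at h
  exact h.congr fun T => (div_eq_mul_inv _ _).symm

/-- Theorem 7 of the paper: the spectral efficiency loss of the half-duplex strategy with
closed-loop training, at the approximately optimal training duration, satisfies
`T * L(T) / ln T → R * M * (M-1) / ln(1+fP)` as `T → ∞`. -/
theorem SE_loss_halfduplex_closed
    (M : ℕ) (hM : 2 ≤ M) (P f R : ℝ)
    (hP : 0 < P) (hf : 0 < f) (hR : 0 < R)
    (c : ℝ) (hc : c = (M : ℝ) * R)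
    (x : ℝ → ℝ)
    (hxdef : ∀ T : ℝ, x T = (M : ℝ) * ((M : ℝ) - 1) *
        (Real.log (T * P / c) +
          Real.log ((1 + f * P) ^ ((1 : ℝ) / ((M : ℝ) - 1)) - 1)) /
        Real.log (1 + f * P))
    (L : ℝ → ℝ)
    (hLdef : ∀ T : ℝ, L T = (x T / T) * R +
        Real.log (1 + P * (1 + f * P) ^ (-(x T / ((M : ℝ) * ((M : ℝ) - 1)))))) :
    Tendsto (fun T : ℝ => T * L T / Real.log T) atTop
      (nhds (R * (M : ℝ) * ((M : ℝ) - 1) / Real.log (1 + f * P))) := by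
  have hM₁ : (0 : ℝ) < M - 1 := by
    have : (2 : ℝ) ≤ M := by exact_mod_cast hM
    linarith
  have hb : 1 < 1 + f * P := by nlinarith [mul_pos hf hP]
  have hc₀ : 0 < c := hc ▸ mul_pos (by linarith) hR
  set b := 1 + f * P
  set D := b ^ ((1 : ℝ) / ((M : ℝ) - 1)) - 1
  have hD : 0 < D := sub_pos.2 (one_lt_rpow hb (by positivity))
  have hlogb : log b ≠ 0 := (log_pos hb).ne'
  set a := (M : ℝ) * ((M : ℝ) - 1)
  have hdecomp : ∀ T > 1, T * L T / log T =
      (R * a / log b * log T + R * a / log b * (log (P / c) + log D)) / log T +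
        T * log (1 + c / D / T) / log T := by
    intro T hT
    have hT₀ : 0 < T := by linarith
    have hlogTPc : log (T * P / c) = log T + log (P / c) := by
      rw [mul_div_assoc, log_mul hT₀.ne' (div_pos hP hc₀).ne']
    have hinterference : P * b ^ (-(x T / a)) = c / D / T := by
      rw [hxdef, mul_div_assoc, mul_div_cancel_left₀ _ (by positivity),
        ← log_mul (by positivity) hD.ne',
        rpow_neg_log_div_log (by linarith) hb.ne' (by positivity)]
      field_simp
    rw [hLdef, hinterference, hxdef, hlogTPc]
    field_simp
    ring
  have hlimit := (tendsto_affine_log_div_log (R * a / log b)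
    (R * a / log b * (log (P / c) + log D))).add (tendsto_mul_log_one_add_div_div_log (c / D))
  rw [add_zero] at hlimit
  rw [mul_assoc R]
  exact hlimit.congr' ((eventually_gt_atTop 1).mono fun T hT => (hdecomp T hT).symm)
end

section
/- Let M ≥ 2 be an integer and let P, f, T, R > 0 be real numbers. Set x = sqrt((M−1)·T/(f·R)). Then (x/T)·R + ln(1 + ((M−1)·P/M) / (1 + f·x·P/M)) ≤ 2·sqrt((M−1)·R/(f·T)). (Theorem 8: the spectral efficiency loss of the half-duplex strategy with open-loop training, evaluated at the approximately optimal training duration, is at most 2·sqrt((M−1)·R/(f·T)).) -/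
open Real

/-- Theorem 8 of the paper: the spectral efficiency loss of the half-duplex strategy with
open-loop training, evaluated at the approximately optimal training duration
`x = sqrt((M-1)T/(fR))`, is at most `2*sqrt((M-1)R/(fT))`. -/
theorem SE_loss_halfduplex_open
    (M : ℕ) (hM : 2 ≤ M) (P f T R : ℝ)
    (hP : 0 < P) (hf : 0 < f) (hT : 0 < T) (hR : 0 < R)
    (x : ℝ) (hx : x = Real.sqrt (((M : ℝ) - 1) * T / (f * R))) :
    (x / T) * R +
      Real.log (1 + (((M : ℝ) - 1) * P / (M : ℝ)) / (1 + f * x * P / (M : ℝ)))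
      ≤ 2 * Real.sqrt (((M : ℝ) - 1) * R / (f * T)) := by
  have hm : (1:ℝ) ≤ (M:ℝ) - 1 := by
    have : (2:ℝ) ≤ (M:ℝ) := by exact_mod_cast hM
    linarith
  have hm0 : (0:ℝ) < (M:ℝ) - 1 := by linarith
  have hMpos : (0:ℝ) < (M:ℝ) := by linarith
  have harg : 0 < ((M:ℝ) - 1) * T / (f * R) := by positivity
  have hx0 : 0 < x := by rw [hx]; exact Real.sqrt_pos.mpr harg
  have hxsq : x ^ 2 = ((M:ℝ) - 1) * T / (f * R) := by
    rw [hx]; exact Real.sq_sqrt harg.le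
  set s := Real.sqrt (((M:ℝ) - 1) * R / (f * T)) with hs
  -- first term equals s
  have h1 : (x / T) * R = s := by
    have heq : ((M:ℝ) - 1) * R / (f * T) = ((x / T) * R) ^ 2 := by
      have : ((x / T) * R) ^ 2 = x ^ 2 * R ^ 2 / T ^ 2 := by ring
      rw [this, hxsq]
      field_simp
    rw [hs, heq, Real.sqrt_sq (by positivity)]
  -- (M-1)/(f*x) = s
  have h2 : ((M:ℝ) - 1) / (f * x) = s := by
    have heq : ((M:ℝ) - 1) * R / (f * T) = (((M:ℝ) - 1) / (f * x)) ^ 2 := by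
      have : (((M:ℝ) - 1) / (f * x)) ^ 2 = ((M:ℝ) - 1) ^ 2 / (f ^ 2 * x ^ 2) := by ring
      rw [this, hxsq]
      field_simp
    rw [hs, heq, Real.sqrt_sq (by positivity)]
  -- bound the log term by s
  have hA : 0 ≤ ((M:ℝ) - 1) * P / (M:ℝ) := by positivity
  have hB : 0 < f * x * P / (M:ℝ) := by positivity
  have hy0 : 0 ≤ (((M:ℝ) - 1) * P / (M:ℝ)) / (1 + f * x * P / (M:ℝ)) := by positivity
  have hlog : Real.log (1 + (((M:ℝ) - 1) * P / (M:ℝ)) / (1 + f * x * P / (M:ℝ)))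
      ≤ (((M:ℝ) - 1) * P / (M:ℝ)) / (1 + f * x * P / (M:ℝ)) := by
    have := Real.log_le_sub_one_of_pos
      (x := 1 + (((M:ℝ) - 1) * P / (M:ℝ)) / (1 + f * x * P / (M:ℝ))) (by linarith)
    linarith
  have hstep : (((M:ℝ) - 1) * P / (M:ℝ)) / (1 + f * x * P / (M:ℝ))
      ≤ ((M:ℝ) - 1) / (f * x) := by
    have h1' : (((M:ℝ) - 1) * P / (M:ℝ)) / (1 + f * x * P / (M:ℝ))
        ≤ (((M:ℝ) - 1) * P / (M:ℝ)) / (f * x * P / (M:ℝ)) :=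
      div_le_div_of_nonneg_left hA hB (by linarith)
    have h2' : (((M:ℝ) - 1) * P / (M:ℝ)) / (f * x * P / (M:ℝ)) = ((M:ℝ) - 1) / (f * x) := by
      field_simp
    linarith [h1', h2'.le, h2'.ge]
  have hlogs : Real.log (1 + (((M:ℝ) - 1) * P / (M:ℝ)) / (1 + f * x * P / (M:ℝ))) ≤ s := by
    calc Real.log (1 + (((M:ℝ) - 1) * P / (M:ℝ)) / (1 + f * x * P / (M:ℝ)))
        ≤ (((M:ℝ) - 1) * P / (M:ℝ)) / (1 + f * x * P / (M:ℝ)) := hlog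
      _ ≤ ((M:ℝ) - 1) / (f * x) := hstep
      _ = s := h2
  linarith [h1, hlogs]
end

section
/- Let M ≥ 2 be an integer, let T, T^{tr}, α, ζ > 0 be real numbers, and set θ = M(M−1)/T. Then lim_{P→∞} [ ln(1 + P/M) − ln( (1 + P·(1+P^ζ)^{−T^{tr}/(M(M−1))} + α·P^ζ) / (1 + α·P^ζ/(1 + P/M)) ) ] / ln P = max( min( (ζ/θ)·(T^{tr}/T), 1 − ζ ), 0 ). (Lemma 2: the high-SNR multiplexing order of the downlink rate lower bound during full-duplex closed-loop training, when each user's training power is P^ζ.) -/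
/-!
Write `f ≍ P ^ a` when `log (f P) / log P → a`. These growth exponents add under products,
change sign under inverses, scale under real powers, and take the maximum under sums of
positive functions, because `log (x + y)` lies within `log 2` of `max (log x) (log y)`.
With `β = Ttr / (M (M - 1))`, the numerator of the interference penalty has exponent
`max (max 0 (1 - ζ β)) ζ`, its denominator `max 0 (ζ - 1)`, and `1 + P / M` has exponent `1`;
the claimed limit is the resulting difference of exponents.
-/

open Real Filter Topology

lemma Real.max_log_le_log_add {x y : ℝ} (hx : 0 < x) (hy : 0 < y) :
    max (log x) (log y) ≤ log (x + y) :=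
  max_le (log_le_log hx (by linarith)) (log_le_log hy (by linarith))

lemma Real.log_add_le_log_two_add_max {x y : ℝ} (hx : 0 < x) (hy : 0 < y) :
    log (x + y) ≤ log 2 + max (log x) (log y) := by
  wlog hxy : x ≤ y generalizing x y
  · rw [add_comm, max_comm]
    exact this hy hx (by linarith)
  calc log (x + y) ≤ log (2 * y) := log_le_log (by positivity) (by linarith)
    _ = log 2 + log y := log_mul two_ne_zero hy.ne'
    _ ≤ log 2 + max (log x) (log y) := by gcongr; exact le_max_right _ _

/-- `f P = P ^ (a + o(1))` as `P → ∞`, for an eventually positive `f`. -/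
def HasGrowthExponent (f : ℝ → ℝ) (a : ℝ) : Prop :=
  (∀ᶠ P in atTop, 0 < f P) ∧ Tendsto (fun P => log (f P) / log P) atTop (𝓝 a)

namespace HasGrowthExponent

variable {f g : ℝ → ℝ} {a b : ℝ}

lemma const {c : ℝ} (hc : 0 < c) : HasGrowthExponent (fun _ => c) 0 :=
  ⟨.of_forall fun _ => hc, tendsto_const_nhds.div_atTop tendsto_log_atTop⟩

lemma rpow_id (a : ℝ) : HasGrowthExponent (fun P => P ^ a) a := by
  refine ⟨(eventually_gt_atTop 0).mono fun P hP => rpow_pos_of_pos hP a,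
    tendsto_const_nhds.congr' ?_⟩
  filter_upwards [eventually_gt_atTop 1] with P hP
  rw [log_rpow (by linarith), mul_div_cancel_right₀ _ (log_pos hP).ne']

lemma id : HasGrowthExponent (fun P => P) 1 := by
  simpa using rpow_id 1

lemma mul (hf : HasGrowthExponent f a) (hg : HasGrowthExponent g b) :
    HasGrowthExponent (fun P => f P * g P) (a + b) := by
  refine ⟨(hf.1.and hg.1).mono fun P h => mul_pos h.1 h.2, (hf.2.add hg.2).congr' ?_⟩
  filter_upwards [hf.1, hg.1] with P hfP hgP
  rw [log_mul hfP.ne' hgP.ne', add_div]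

lemma inv (hf : HasGrowthExponent f a) : HasGrowthExponent (fun P => (f P)⁻¹) (-a) :=
  ⟨hf.1.mono fun _ h => inv_pos.mpr h, hf.2.neg.congr fun P => by rw [log_inv, neg_div]⟩

lemma div (hf : HasGrowthExponent f a) (hg : HasGrowthExponent g b) :
    HasGrowthExponent (fun P => f P / g P) (a - b) := by
  simpa only [div_eq_mul_inv, sub_eq_add_neg] using hf.mul hg.inv

lemma const_mul {c : ℝ} (hc : 0 < c) (hf : HasGrowthExponent f a) :
    HasGrowthExponent (fun P => c * f P) a := by
  simpa only [zero_add] using (const hc).mul hf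

lemma div_const {c : ℝ} (hc : 0 < c) (hf : HasGrowthExponent f a) :
    HasGrowthExponent (fun P => f P / c) a := by
  simpa only [sub_zero] using hf.div (const hc)

lemma rpow (hf : HasGrowthExponent f a) (r : ℝ) :
    HasGrowthExponent (fun P => f P ^ r) (r * a) := by
  refine ⟨hf.1.mono fun P h => rpow_pos_of_pos h r, (hf.2.const_mul r).congr' ?_⟩
  filter_upwards [hf.1] with P hfP
  rw [log_rpow hfP, mul_div_assoc]

lemma add (hf : HasGrowthExponent f a) (hg : HasGrowthExponent g b) :
    HasGrowthExponent (fun P => f P + g P) (max a b) := by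
  refine ⟨(hf.1.and hg.1).mono fun P h => add_pos h.1 h.2, ?_⟩
  have hmax : Tendsto (fun P => max (log (f P) / log P) (log (g P) / log P)) atTop
      (𝓝 (max a b)) := hf.2.max hg.2
  have hupper := (tendsto_const_nhds (x := log 2)).div_atTop tendsto_log_atTop |>.add hmax
  rw [zero_add] at hupper
  refine tendsto_of_tendsto_of_tendsto_of_le_of_le' hmax hupper ?_ ?_ <;>
    filter_upwards [hf.1, hg.1, eventually_gt_atTop 1] with P hfP hgP hP <;>
    have hlogP := log_pos hP
  · rw [max_div_div_right hlogP.le]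
    exact div_le_div_of_nonneg_right (max_log_le_log_add hfP hgP) hlogP.le
  · rw [max_div_div_right hlogP.le, ← add_div]
    exact div_le_div_of_nonneg_right (log_add_le_log_two_add_max hfP hgP) hlogP.le

end HasGrowthExponent

lemma one_sub_max_sub_max_eq_max_min {b ζ : ℝ} (hb : 0 ≤ b) (hζ : 0 < ζ) :
    1 - (max (max 0 (1 - b)) ζ - max 0 (ζ - 1)) = max (min b (1 - ζ)) 0 := by
  rcases le_total ζ 1 with h | h <;> rcases le_total b (1 - ζ) with h' | h' <;>
    simp only [max_def, min_def] <;> split_ifs <;> linarith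

/-- Lemma 2 of the paper: the high-SNR multiplexing order of the downlink rate lower
bound during full-duplex closed-loop training with user training power `P^ζ`. -/
theorem highSNR_rate_during_training_closed
    (M : ℕ) (hM : 2 ≤ M) (T Ttr α ζ : ℝ)
    (hT : 0 < T) (hTtr : 0 < Ttr) (hα : 0 < α) (hζ : 0 < ζ)
    (θ : ℝ) (hθ : θ = (M : ℝ) * ((M : ℝ) - 1) / T) :
    Tendsto
      (fun P : ℝ =>
        (Real.log (1 + P / (M : ℝ)) -
          Real.log
            ((1 + P * (1 + P ^ ζ) ^ (-(Ttr / ((M : ℝ) * ((M : ℝ) - 1)))) + α * P ^ ζ) /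
              (1 + α * P ^ ζ / (1 + P / (M : ℝ))))) / Real.log P)
      atTop
      (nhds (max (min ((ζ / θ) * (Ttr / T)) (1 - ζ)) 0)) := by
  have hM' : (2 : ℝ) ≤ M := by exact_mod_cast hM
  have hMM : 0 < (M : ℝ) * ((M : ℝ) - 1) := by nlinarith
  set β := Ttr / ((M : ℝ) * ((M : ℝ) - 1)) with hβ_def
  have hζβ : (ζ / θ) * (Ttr / T) = ζ * β := by
    rw [hθ, hβ_def]; field_simp
  have h1 := HasGrowthExponent.const one_pos
  have hP := HasGrowthExponent.id
  have hPζ := HasGrowthExponent.rpow_id ζ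
  have hPM : HasGrowthExponent (fun P => 1 + P / M) 1 := by
    simpa using h1.add (hP.div_const (by positivity : (0 : ℝ) < M))
  have hN : HasGrowthExponent (fun P => 1 + P * (1 + P ^ ζ) ^ (-β) + α * P ^ ζ)
      (max (max 0 (1 - ζ * β)) ζ) := by
    convert (h1.add (hP.mul ((h1.add hPζ).rpow (-β)))).add (hPζ.const_mul hα) using 1
    rw [max_eq_right hζ.le]; ring_nf
  have hD : HasGrowthExponent (fun P => 1 + α * P ^ ζ / (1 + P / M)) (max 0 (ζ - 1)) :=
    h1.add ((hPζ.const_mul hα).div hPM)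
  rw [hζβ, ← one_sub_max_sub_max_eq_max_min (by positivity) hζ]
  simpa only [sub_div] using hPM.2.sub (hN.div hD).2
end

section
/- Let M ≥ 2 be an integer and let T^{tr}, ζ > 0 be real numbers. Then lim_{P→∞} ln( 1 + ((P/M)·(M−1)) / (1 + (T^{tr}/M)·P^ζ) ) / ln P = max(1 − ζ, 0); consequently lim_{P→∞} [ ln(1 + P/M) − ln( 1 + ((P/M)·(M−1)) / (1 + (T^{tr}/M)·P^ζ) ) ] / ln P = min(ζ, 1). (Lemma 3: for open-loop training with user training power P^ζ, the inter-beam interference penalty after training has high-SNR order max(1−ζ,0), so the rate after training has multiplexing order min(ζ,1), independent of the number of training symbols T^{tr}.) -/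
open Real Filter Topology

/-!
For `P ≥ 1`, `1 + c P^γ` lies between two positive multiples of `P^(max γ 0)`, so
`log (1 + c P^γ) / log P → max γ 0`. The interference term `a P / (1 + b P^ζ)` is squeezed
between `a/(1+b) · P^(1-ζ)` and `a/b · P^(1-ζ)`, which gives the order `max (1-ζ) 0` of the
penalty whatever `b = T^tr/M` is; subtracting it from the order `1` of `log (1 + P/M)` leaves
`min ζ 1`.
-/

theorem tendsto_log_div_log_of_rpow_bounds {g : ℝ → ℝ} {γ c₁ c₂ : ℝ} (hc₁ : 0 < c₁)
    (hlower : ∀ᶠ P in atTop, c₁ * P ^ γ ≤ g P) (hupper : ∀ᶠ P in atTop, g P ≤ c₂ * P ^ γ) :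
    Tendsto (fun P => log (g P) / log P) atTop (𝓝 γ) := by
  have hlog_mul_rpow : ∀ c, 0 < c → Tendsto (fun P => log (c * P ^ γ) / log P) atTop (𝓝 γ) := by
    intro c hc
    have h := (tendsto_const_nhds (x := log c)).div_atTop tendsto_log_atTop |>.add_const γ
    rw [zero_add] at h
    refine h.congr' ?_
    filter_upwards [eventually_gt_atTop 1] with P hP
    have hlogP : log P ≠ 0 := (log_pos hP).ne'
    rw [log_mul hc.ne' (rpow_pos_of_pos (by linarith) γ).ne', log_rpow (by linarith)]
    field_simp
  obtain ⟨P, hP, hP_lower, hP_upper⟩ :=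
    ((eventually_gt_atTop 0).and (hlower.and hupper)).exists
  have hc₂ : 0 < c₂ :=
    hc₁.trans_le (le_of_mul_le_mul_right (hP_lower.trans hP_upper) (rpow_pos_of_pos hP γ))
  refine tendsto_of_tendsto_of_tendsto_of_le_of_le' (hlog_mul_rpow c₁ hc₁) (hlog_mul_rpow c₂ hc₂)
    ?_ ?_
  · filter_upwards [hlower, eventually_gt_atTop 1] with P hP_lower hP
    exact div_le_div_of_nonneg_right
      (log_le_log (mul_pos hc₁ (rpow_pos_of_pos (by linarith) γ)) hP_lower) (log_pos hP).le
  · filter_upwards [hlower, hupper, eventually_gt_atTop 1] with P hP_lower hP_upper hP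
    exact div_le_div_of_nonneg_right
      (log_le_log ((mul_pos hc₁ (rpow_pos_of_pos (by linarith) γ)).trans_le hP_lower) hP_upper)
      (log_pos hP).le

theorem tendsto_log_one_add_mul_rpow_div_log {c : ℝ} (hc : 0 < c) (γ : ℝ) :
    Tendsto (fun P => log (1 + c * P ^ γ) / log P) atTop (𝓝 (max γ 0)) := by
  refine tendsto_log_div_log_of_rpow_bounds (lt_min one_pos hc) (c₂ := 1 + c) ?_ ?_ <;>
    filter_upwards [eventually_ge_atTop 1] with P hP
  · have hPγ : 0 ≤ c * P ^ γ := by positivity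
    rcases max_choice γ 0 with h | h <;> rw [h]
    · nlinarith [min_le_right 1 c, rpow_nonneg (zero_le_one.trans hP) γ]
    · rw [rpow_zero, mul_one]
      linarith [min_le_left 1 c]
  · have h_one : 1 ≤ P ^ max γ 0 := one_le_rpow hP (le_max_right γ 0)
    have h_rpow : P ^ γ ≤ P ^ max γ 0 := rpow_le_rpow_of_exponent_le hP (le_max_left γ 0)
    nlinarith

theorem div_one_add_mul_rpow_mem_Icc {a b ζ P : ℝ} (ha : 0 < a) (hb : 0 < b) (hζ : 0 ≤ ζ)
    (hP : 1 ≤ P) :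
    a * P / (1 + b * P ^ ζ) ∈ Set.Icc (a / (1 + b) * P ^ (1 - ζ)) (a / b * P ^ (1 - ζ)) := by
  have hPζ : 1 ≤ P ^ ζ := one_le_rpow hP hζ
  have hP_rpow_sub : P ^ (1 - ζ) = P / P ^ ζ := by rw [rpow_sub (by linarith), rpow_one]
  rw [hP_rpow_sub]
  constructor
  · rw [div_mul_div_comm, mul_comm b]
    gcongr
    nlinarith
  · rw [div_mul_div_comm, mul_comm b]
    gcongr
    linarith

theorem tendsto_log_one_add_div_one_add_rpow_div_log {a b ζ : ℝ} (ha : 0 < a) (hb : 0 < b)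
    (hζ : 0 ≤ ζ) :
    Tendsto (fun P => log (1 + a * P / (1 + b * P ^ ζ)) / log P) atTop (𝓝 (max (1 - ζ) 0)) := by
  refine tendsto_of_tendsto_of_tendsto_of_le_of_le'
    (tendsto_log_one_add_mul_rpow_div_log (div_pos ha (by linarith : (0 : ℝ) < 1 + b)) (1 - ζ))
    (tendsto_log_one_add_mul_rpow_div_log (div_pos ha hb) (1 - ζ)) ?_ ?_ <;>
    filter_upwards [eventually_gt_atTop 1] with P hP <;>
    obtain ⟨h_lower, h_upper⟩ := div_one_add_mul_rpow_mem_Icc ha hb hζ hP.le <;>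
    refine div_le_div_of_nonneg_right (log_le_log ?_ (by linarith)) (log_pos hP).le <;>
    positivity

/-- Lemma 3 of the paper: for open-loop training with user training power `P^ζ`, the
inter-beam interference penalty after training has high-SNR order `max(1-ζ,0)`, and the
rate after training has multiplexing order `min(ζ,1)`, independent of `T^tr`. -/
theorem highSNR_rate_after_training_open
    (M : ℕ) (hM : 2 ≤ M) (Ttr ζ : ℝ) (hTtr : 0 < Ttr) (hζ : 0 < ζ) :
    Tendsto
      (fun P : ℝ =>
        Real.log (1 + (P / (M : ℝ) * ((M : ℝ) - 1)) / (1 + (Ttr / (M : ℝ)) * P ^ ζ)) /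
          Real.log P)
      atTop (nhds (max (1 - ζ) 0)) ∧
    Tendsto
      (fun P : ℝ =>
        (Real.log (1 + P / (M : ℝ)) -
          Real.log (1 + (P / (M : ℝ) * ((M : ℝ) - 1)) / (1 + (Ttr / (M : ℝ)) * P ^ ζ))) /
          Real.log P)
      atTop (nhds (min ζ 1)) := by
  have hM_pos : (0 : ℝ) < M := by positivity
  have hM_gt_one : (1 : ℝ) < M := by exact_mod_cast hM
  have h_interference := tendsto_log_one_add_div_one_add_rpow_div_log
    (div_pos (sub_pos.2 hM_gt_one) hM_pos) (div_pos hTtr hM_pos) hζ.le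
  have h_penalty : Tendsto (fun P : ℝ =>
      log (1 + P / M * (M - 1) / (1 + Ttr / M * P ^ ζ)) / log P) atTop (𝓝 (max (1 - ζ) 0)) := by
    refine h_interference.congr fun P => ?_
    rw [div_mul_comm, div_mul_eq_mul_div]
  have h_rate : Tendsto (fun P : ℝ => log (1 + P / M) / log P) atTop (𝓝 1) := by
    simpa [rpow_one, div_eq_inv_mul] using
      tendsto_log_one_add_mul_rpow_div_log (inv_pos.2 hM_pos) 1
  refine ⟨h_penalty, ?_⟩
  have h_order : 1 - max (1 - ζ) 0 = min ζ 1 := by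
    rw [← min_sub_sub_left, sub_sub_cancel, sub_zero]
  simpa only [sub_div, h_order] using h_rate.sub h_penalty
end

section
/- Let θ > 0 and let ζ satisfy 0 < ζ ≤ θ/(1+θ). Define r(t) = (t/2)·max(min(ζ·t/θ, 1−ζ), 0) + (1−t)·min(ζ·t/θ, 1) for t ∈ [0,1]. Then sup over t ∈ [0,1] of r(t) equals ζ/(2θ), attained at t = 1; i.e., for sufficiently small training power exponent ζ, inter-node interference causes no loss and the sequential beamforming multiplexing gain equals the interference-free value ζ/(2θ). (Low-ζ branch of Theorem 11.) -/
open Real Set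

/-- The paper's `r(t)`, with `t` the training fraction. -/
noncomputable def seqBFGain (θ ζ t : ℝ) : ℝ :=
  (t / 2) * max (min (ζ * t / θ) (1 - ζ)) 0 + (1 - t) * min (ζ * t / θ) 1

section LowZeta

variable {θ ζ t : ℝ}

lemma training_rate_le_one_sub (hθ : 0 < θ) (hζ : 0 ≤ ζ) (hζθ : ζ * (1 + θ) ≤ θ) (ht : t ≤ 1) :
    ζ * t / θ ≤ 1 - ζ := by
  rw [div_le_iff₀ hθ]
  nlinarith

/-- In the low-`ζ` regime neither `min` is active, so `r` is the concave quadratic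
`(ζ/θ)(t - t²/2)`. -/
lemma seqBFGain_eq_of_mul_one_add_le (hθ : 0 < θ) (hζ : 0 ≤ ζ) (hζθ : ζ * (1 + θ) ≤ θ)
    (ht₀ : 0 ≤ t) (ht₁ : t ≤ 1) :
    seqBFGain θ ζ t = ζ / θ * (t - t ^ 2 / 2) := by
  have hle := training_rate_le_one_sub hθ hζ hζθ ht₁
  have hle_one : ζ * t / θ ≤ 1 := hle.trans (by linarith)
  have hnonneg : 0 ≤ ζ * t / θ := by positivity
  rw [seqBFGain, min_eq_left hle, min_eq_left hle_one, max_eq_left hnonneg]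
  ring

end LowZeta

lemma sub_sq_div_two_le_half (t : ℝ) : t - t ^ 2 / 2 ≤ 1 / 2 := by
  nlinarith [sq_nonneg (1 - t)]

/-- Low-ζ branch of Theorem 11 of the paper: for small training power exponent `ζ`,
inter-node interference causes no multiplexing-gain loss for sequential beamforming,
the maximum `ζ/(2θ)` being attained at `t = 1`. -/
theorem max_multiplexing_gain_seqbf_closed_INI_lowzeta
    (θ ζ : ℝ) (hθ : 0 < θ) (hζ : 0 < ζ) (hζθ : ζ ≤ θ / (1 + θ))
    (r : ℝ → ℝ)
    (hr : ∀ t : ℝ, r t = (t / 2) * max (min (ζ * t / θ) (1 - ζ)) 0 +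
        (1 - t) * min (ζ * t / θ) 1) :
    IsGreatest (r '' Set.Icc 0 1) (ζ / (2 * θ)) ∧ r 1 = ζ / (2 * θ) := by
  have hr : r = seqBFGain θ ζ := funext hr
  subst hr
  have hζθ : ζ * (1 + θ) ≤ θ := (le_div_iff₀ (by linarith)).mp hζθ
  have hgain := fun t (ht : t ∈ Icc (0 : ℝ) 1) =>
    seqBFGain_eq_of_mul_one_add_le hθ hζ.le hζθ ht.1 ht.2
  have hr₁ : seqBFGain θ ζ 1 = ζ / (2 * θ) := by
    rw [hgain 1 (right_mem_Icc.mpr zero_le_one)]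
    field_simp
    ring
  refine ⟨⟨⟨1, right_mem_Icc.mpr zero_le_one, hr₁⟩, ?_⟩, hr₁⟩
  rintro _ ⟨t, ht, rfl⟩
  calc seqBFGain θ ζ t = ζ / θ * (t - t ^ 2 / 2) := hgain t ht
    _ ≤ ζ / θ * (1 / 2) := by gcongr; exact sub_sq_div_two_le_half t
    _ = ζ / (2 * θ) := by ring
end

section
/- Let θ ∈ (0,2) and let ζ satisfy 3θ/(2+3θ) < ζ < 3θ/(2−θ) and ζ < 1. Define r(t) = (t/2)·max(min(ζ·t/θ, 1−ζ), 0) + (1−t)·min(ζ·t/θ, 1) for t ∈ [0,1]. Then sup over t ∈ [0,1] of r(t) equals ((2−θ)ζ + θ)² / (16·ζ·θ), attained at t* = ((2−θ)ζ + θ)/(4ζ). (Middle branch of Theorem 11: maximal multiplexing gain of sequential beamforming with closed-loop training when inter-node interference dominates during training.) -/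
open Real Set

/-- Middle branch of Theorem 11 of the paper: maximal multiplexing gain of sequential
beamforming with closed-loop training when inter-node interference dominates during
training; the maximum `((2-θ)ζ+θ)²/(16ζθ)` is attained at `t* = ((2-θ)ζ+θ)/(4ζ)`. -/
theorem max_multiplexing_gain_seqbf_closed_INI_midzeta
    (θ ζ : ℝ) (hθ : 0 < θ) (hθ2 : θ < 2)
    (hζlb : 3 * θ / (2 + 3 * θ) < ζ) (hζub : ζ < 3 * θ / (2 - θ)) (hζ1 : ζ < 1)
    (r : ℝ → ℝ)
    (hr : ∀ t : ℝ, r t = (t / 2) * max (min (ζ * t / θ) (1 - ζ)) 0 +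
        (1 - t) * min (ζ * t / θ) 1)
    (tstar : ℝ) (htstar : tstar = ((2 - θ) * ζ + θ) / (4 * ζ)) :
    IsGreatest (r '' Set.Icc 0 1) (((2 - θ) * ζ + θ) ^ 2 / (16 * ζ * θ)) ∧
    tstar ∈ Set.Icc (0 : ℝ) 1 ∧
    r tstar = ((2 - θ) * ζ + θ) ^ 2 / (16 * ζ * θ) := by
  have hζ0 : 0 < ζ := lt_trans (by positivity) hζlb
  have h2θ : (0:ℝ) < 2 - θ := by linarith
  have hlb' : 3 * θ < ζ * (2 + 3 * θ) := by
    rw [div_lt_iff₀ (by linarith : (0:ℝ) < 2 + 3 * θ)] at hζlb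
    linarith
  have hub' : ζ * (2 - θ) < 3 * θ := by
    rw [lt_div_iff₀ h2θ] at hζub
    linarith
  have hnum : 0 < (2 - θ) * ζ + θ := by nlinarith
  -- t* ∈ [0,1]
  have hts0 : 0 ≤ tstar := by
    rw [htstar]
    positivity
  have hts1 : tstar ≤ 1 := by
    rw [htstar, div_le_one (by positivity)]
    nlinarith
  -- value of a at t*
  have hkey : ζ * tstar / θ = ((2 - θ) * ζ + θ) / (4 * θ) := by
    rw [htstar]; field_simp
  have ha_le1 : ζ * tstar / θ ≤ 1 := by
    rw [hkey, div_le_one (by positivity)]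
    nlinarith
  have ha_ge : 1 - ζ ≤ ζ * tstar / θ := by
    rw [hkey, le_div_iff₀ (by positivity)]
    nlinarith
  have hrt : r tstar = ((2 - θ) * ζ + θ) ^ 2 / (16 * ζ * θ) := by
    rw [hr, min_eq_right ha_ge, max_eq_left (by linarith : (0:ℝ) ≤ 1 - ζ),
      min_eq_left ha_le1, hkey, htstar]
    field_simp
    ring
  refine ⟨⟨⟨tstar, ⟨hts0, hts1⟩, hrt⟩, ?_⟩, ⟨hts0, hts1⟩, hrt⟩
  rintro y ⟨t, ⟨ht0, ht1⟩, rfl⟩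
  have ha0 : 0 ≤ ζ * t / θ := by positivity
  have hg : (t / 2) * (1 - ζ) + (1 - t) * (ζ * t / θ) ≤
      ((2 - θ) * ζ + θ) ^ 2 / (16 * ζ * θ) := by
    have hdiff : ((2 - θ) * ζ + θ) ^ 2 / (16 * ζ * θ) -
        ((t / 2) * (1 - ζ) + (1 - t) * (ζ * t / θ)) =
        (4 * ζ * t - ((2 - θ) * ζ + θ)) ^ 2 / (16 * ζ * θ) := by
      field_simp
      ring
    nlinarith [div_nonneg (sq_nonneg (4 * ζ * t - ((2 - θ) * ζ + θ)))
      (by positivity : (0:ℝ) ≤ 16 * ζ * θ)]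
  have h1 : (t / 2) * max (min (ζ * t / θ) (1 - ζ)) 0 ≤ (t / 2) * (1 - ζ) := by
    apply mul_le_mul_of_nonneg_left _ (by linarith)
    exact max_le (min_le_right _ _) (by linarith)
  have h2 : (1 - t) * min (ζ * t / θ) 1 ≤ (1 - t) * (ζ * t / θ) :=
    mul_le_mul_of_nonneg_left (min_le_left _ _) (by linarith)
  rw [hr]
  linarith
end

section
/- Let θ ∈ (0, 1/2) and let ζ satisfy 3θ/(2−θ) ≤ ζ < 1. Define r(t) = (t/2)·max(min(ζ·t/θ, 1−ζ), 0) + (1−t)·min(ζ·t/θ, 1) for t ∈ [0,1]. Then sup over t ∈ [0,1] of r(t) equals 1 − θ/2 − θ/(2ζ), attained at t = θ/ζ. (High-ζ branch of Theorem 11.) -/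
open Real Set

/-- High-ζ branch of Theorem 11 of the paper: maximal multiplexing gain of sequential
beamforming with closed-loop training; the maximum `1 - θ/2 - θ/(2ζ)` is attained at
`t = θ/ζ`. -/
theorem max_multiplexing_gain_seqbf_closed_INI_highzeta
    (θ ζ : ℝ) (hθ : 0 < θ) (hθ2 : θ < 1 / 2)
    (hζlb : 3 * θ / (2 - θ) ≤ ζ) (hζ1 : ζ < 1)
    (r : ℝ → ℝ)
    (hr : ∀ t : ℝ, r t = (t / 2) * max (min (ζ * t / θ) (1 - ζ)) 0 +
        (1 - t) * min (ζ * t / θ) 1) :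
    IsGreatest (r '' Set.Icc 0 1) (1 - θ / 2 - θ / (2 * ζ)) ∧
    θ / ζ ∈ Set.Icc (0 : ℝ) 1 ∧
    r (θ / ζ) = 1 - θ / 2 - θ / (2 * ζ) := by
  have h2θ : 0 < 2 - θ := by linarith
  have hζpos : 0 < ζ := lt_of_lt_of_le (div_pos (by linarith) h2θ) hζlb
  have hζlb' : 3 * θ ≤ 2 * ζ - ζ * θ := by
    have := (div_le_iff₀ h2θ).mp hζlb
    nlinarith
  have hθζ : θ < ζ := by nlinarith
  have ht0 : 0 < θ / ζ := div_pos hθ hζpos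
  have ht1 : θ / ζ < 1 := (div_lt_one hζpos).mpr hθζ
  have hmem : θ / ζ ∈ Set.Icc (0:ℝ) 1 := ⟨le_of_lt ht0, le_of_lt ht1⟩
  have hq : ζ * (θ / ζ) / θ = 1 := by field_simp
  have hval : r (θ / ζ) = 1 - θ / 2 - θ / (2 * ζ) := by
    rw [hr, hq]
    have h1 : min (1:ℝ) (1 - ζ) = 1 - ζ := min_eq_right (by linarith)
    have h2 : max (1 - ζ) 0 = 1 - ζ := max_eq_left (by linarith)
    rw [h1, h2, min_self]
    field_simp
    ring
  refine ⟨⟨⟨θ/ζ, hmem, hval⟩, ?_⟩, hmem, hval⟩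
  rintro y ⟨t, ⟨ht0', ht1'⟩, rfl⟩
  rw [hr]
  have hd : θ / (2 * ζ) * (2 * ζ) = θ := by field_simp
  set d := θ / (2 * ζ) with hdd
  rcases le_or_gt 1 (ζ * t / θ) with hB | hA
  · -- case B : ζ t / θ ≥ 1
    have hmin1 : min (ζ * t / θ) 1 = 1 := min_eq_right hB
    have hmin2 : min (ζ * t / θ) (1 - ζ) = 1 - ζ :=
      min_eq_right (le_trans (by linarith) hB)
    have hmax : max (1 - ζ) 0 = 1 - ζ := max_eq_left (by linarith)
    rw [hmin1, hmin2, hmax]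
    have htζ : θ ≤ ζ * t := by
      have := (one_le_div hθ).mp hB
      linarith
    nlinarith [mul_le_mul_of_nonneg_left htζ (by linarith : (0:ℝ) ≤ 1 + ζ)]
  · -- case A : ζ t / θ < 1
    have hmin1 : min (ζ * t / θ) 1 = ζ * t / θ := min_eq_left hA.le
    have htζ : ζ * t ≤ θ := by
      have := (div_lt_one hθ).mp hA
      linarith
    have hq0 : 0 ≤ ζ * t / θ := div_nonneg (by positivity) hθ.le
    have hqθ : ζ * t / θ * θ = ζ * t := by field_simp
    rw [hmin1]
    rcases le_or_gt (ζ * t / θ) (1 - ζ) with hA1 | hA2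
    · -- subcase A1 : ζ t / θ ≤ 1 - ζ
      have hmin2 : min (ζ * t / θ) (1 - ζ) = ζ * t / θ := min_eq_left hA1
      have hmax : max (ζ * t / θ) 0 = ζ * t / θ := max_eq_left hq0
      rw [hmin2, hmax]
      have h1 : θ * (1 - ζ) - ζ * t ≥ 0 := by
        have := (div_le_iff₀ hθ).mp hA1
        linarith
      have h2 : 2 * ζ - θ * (1 - ζ) - ζ * t ≥ 0 := by nlinarith
      nlinarith [mul_nonneg h1 h2, mul_nonneg hζpos.le (by linarith : 2 * ζ - ζ * θ - 3 * θ ≥ 0),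
        mul_pos hθ hζpos, sq_nonneg (ζ * t), hqθ]
    · -- subcase A2 : 1 - ζ < ζ t / θ < 1
      have hmin2 : min (ζ * t / θ) (1 - ζ) = 1 - ζ := min_eq_right hA2.le
      have hmax : max (1 - ζ) 0 = 1 - ζ := max_eq_left (by linarith)
      rw [hmin2, hmax]
      have h1 : θ - ζ * t ≥ 0 := by linarith
      have h3 : θ * (1 - ζ) + 2 * ζ - 2 * θ - 2 * (ζ * t) ≥ 0 := by linarith
      nlinarith [mul_nonneg h1 h3, mul_pos hθ hζpos, hqθ]
end

section
/- Let θ > 0 and let ζ ≥ 1. Define r(t) = (t/2)·max(min(ζ·t/θ, 1−ζ), 0) + (1−t)·min(ζ·t/θ, 1) for t ∈ [0,1]. Then r(t) = (1−t)·min(ζt/θ, 1) for every t ∈ [0,1], and hence sup over t ∈ [0,1] of r(t) equals ζ/(4θ) if ζ < 2θ and equals 1 − θ/ζ if ζ ≥ 2θ; i.e., for training power exponent ζ ≥ 1, inter-node interference eliminates any downlink benefit during the training phase and sequential beamforming achieves exactly the half-duplex multiplexing gain. (Final branch of Theorem 11.) -/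
open Real Set

/-- Final branch of Theorem 11 of the paper: for training power exponent `ζ ≥ 1`,
inter-node interference eliminates any downlink benefit during the training phase and
sequential beamforming achieves exactly the half-duplex multiplexing gain. -/
theorem max_multiplexing_gain_seqbf_closed_INI_zeta_ge_one
    (θ ζ : ℝ) (hθ : 0 < θ) (hζ : 1 ≤ ζ)
    (r : ℝ → ℝ)
    (hr : ∀ t : ℝ, r t = (t / 2) * max (min (ζ * t / θ) (1 - ζ)) 0 +
        (1 - t) * min (ζ * t / θ) 1) :
    (∀ t ∈ Set.Icc (0 : ℝ) 1, r t = (1 - t) * min (ζ * t / θ) 1) ∧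
    (ζ < 2 * θ → sSup (r '' Set.Icc 0 1) = ζ / (4 * θ)) ∧
    (2 * θ ≤ ζ → sSup (r '' Set.Icc 0 1) = 1 - θ / ζ) := by
  have hζ0 : (0:ℝ) < ζ := lt_of_lt_of_le one_pos hζ
  have hsimp : ∀ t : ℝ, r t = (1 - t) * min (ζ * t / θ) 1 := by
    intro t
    rw [hr t]
    have h1 : max (min (ζ * t / θ) (1 - ζ)) 0 = 0 := by
      apply max_eq_right
      exact le_trans (min_le_right _ _) (by linarith)
    rw [h1]; ring
  refine ⟨fun t _ => hsimp t, ?_, ?_⟩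
  · intro hcase
    apply IsGreatest.csSup_eq
    constructor
    · refine ⟨1/2, ⟨by norm_num, by norm_num⟩, ?_⟩
      rw [hsimp]
      have : min (ζ * (1/2) / θ) 1 = ζ * (1/2) / θ := by
        apply min_eq_left
        rw [div_le_one hθ]; linarith
      rw [this]; field_simp; ring
    · rintro y ⟨t, ⟨ht0, ht1⟩, rfl⟩
      rw [hsimp]
      have hmin : min (ζ * t / θ) 1 ≤ ζ * t / θ := min_le_left _ _
      have h1t : (0:ℝ) ≤ 1 - t := by linarith
      calc (1 - t) * min (ζ * t / θ) 1 ≤ (1 - t) * (ζ * t / θ) :=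
            mul_le_mul_of_nonneg_left hmin h1t
        _ ≤ ζ / (4 * θ) := by
            rw [show (1-t) * (ζ*t/θ) = ((1-t)*(ζ*t))/θ by ring,
              div_le_div_iff₀ hθ (by linarith)]
            nlinarith [mul_nonneg (mul_nonneg hζ0.le hθ.le) (sq_nonneg (1 - 2*t))]
  · intro hcase
    apply IsGreatest.csSup_eq
    constructor
    · refine ⟨θ/ζ, ⟨le_of_lt (div_pos hθ hζ0), by rw [div_le_one hζ0]; linarith⟩, ?_⟩
      rw [hsimp]
      have : ζ * (θ/ζ) / θ = 1 := by field_simp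
      rw [this, min_self, mul_one]
    · rintro y ⟨t, ⟨ht0, ht1⟩, rfl⟩
      rw [hsimp]
      have h1t : (0:ℝ) ≤ 1 - t := by linarith
      rcases min_cases (ζ * t / θ) 1 with ⟨heq, hle⟩ | ⟨heq, hle⟩
      · rw [heq]
        rw [div_le_one hθ] at hle
        have key : (θ - ζ*t) * (ζ - θ - ζ*t) ≥ 0 := by
          apply mul_nonneg <;> linarith
        rw [← sub_nonneg]
        have hθζ : (0:ℝ) < θ * ζ := mul_pos hθ hζ0
        rw [show 1 - θ/ζ - (1-t) * (ζ*t/θ) = (θ*(ζ-θ) - ζ*t*(ζ - ζ*t)) / (θ*ζ) by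
          field_simp]
        apply div_nonneg _ (le_of_lt hθζ)
        nlinarith
      · rw [heq, mul_one]
        rw [lt_div_iff₀ hθ] at hle
        have : θ/ζ ≤ t := by rw [div_le_iff₀ hζ0]; nlinarith
        linarith
end
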